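/- arXiv:2302.03315 — 7 statements merged into one kernel-verified Lean document; each statement's English description precedes it below -/
import Mathlib

section
/- Let R be a commutative ring and n ≥ 1. Suppose there are ideals I₀ ≤ I₀' of R such that the R-module I₀'/I₀ is an internal direct sum of n nontrivial R-submodules (i.e., there are n nonzero independent submodules of I₀'/I₀ whose sum is all of I₀'/I₀). Then there exist ideals I ≤ I' of R such that the R-module I'/I is a direct sum of n simple R-modules. -/
/-- Auxiliary: if each ideal `K i ≤ L` maps into a submodule `G` of a quotient of `L`,
then so does their supremum. -/
theorem aux_mk_iSup {R : Type*} [CommRing R] {ι : Sort*} (L : Ideal R)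
    (P : Submodule R ↥L) (K : ι → Ideal R) (hK : ∀ i, K i ≤ L)
    (G : Submodule R (↥L ⧸ P))
    (hmem : ∀ i, ∀ w, ∀ hw : w ∈ L, w ∈ K i →
      (Submodule.Quotient.mk ⟨w, hw⟩ : ↥L ⧸ P) ∈ G) :
    ∀ w, ∀ hw : w ∈ L, w ∈ (⨆ i, K i) →
      (Submodule.Quotient.mk ⟨w, hw⟩ : ↥L ⧸ P) ∈ G := by
  have main : ∀ w, w ∈ (⨆ i, K i) →
      ∃ hw : w ∈ L, (Submodule.Quotient.mk ⟨w, hw⟩ : ↥L ⧸ P) ∈ G := by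
    intro w hw
    refine Submodule.iSup_induction
      (motive := fun w => ∃ hw : w ∈ L, (Submodule.Quotient.mk ⟨w, hw⟩ : ↥L ⧸ P) ∈ G) K hw ?_ ?_ ?_
    · intro i x hx
      exact ⟨hK i hx, hmem i x (hK i hx) hx⟩
    · refine ⟨L.zero_mem, ?_⟩
      rw [show (⟨0, L.zero_mem⟩ : ↥L) = 0 from rfl, Submodule.Quotient.mk_zero]
      exact G.zero_mem
    · rintro a b ⟨ha, hga⟩ ⟨hb, hgb⟩
      refine ⟨L.add_mem ha hb, ?_⟩
      rw [show (⟨a + b, L.add_mem ha hb⟩ : ↥L) = ⟨a, ha⟩ + ⟨b, hb⟩ from rfl,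
        Submodule.Quotient.mk_add]
      exact G.add_mem hga hgb
  intro w hw hsup
  obtain ⟨hw', h⟩ := main w hsup
  exact h

/-- If a commutative ring `R` has ideals `I₀ ≤ I₀'` such that the `R`-module `I₀'/I₀` is an
internal direct sum of `n` nontrivial submodules, then there are ideals `I ≤ I'` such that
the `R`-module `I'/I` is an internal direct sum of `n` simple submodules. -/
theorem exists_semisimple_subquotient_of_directSum_nontrivial
    {R : Type*} [CommRing R] {n : ℕ} (hn : 1 ≤ n)
    (I₀ I₀' : Ideal R) (hle : I₀ ≤ I₀')
    (N : Fin n → Submodule R (↥I₀' ⧸ Submodule.comap I₀'.subtype I₀))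
    (hbot : ∀ i, N i ≠ ⊥)
    (hind : iSupIndep N)
    (hsup : ⨆ i, N i = ⊤) :
    ∃ I I' : Ideal R, I ≤ I' ∧
      ∃ S : Fin n → Submodule R (↥I' ⧸ Submodule.comap I'.subtype I),
        (∀ i, IsSimpleModule R ↥(S i)) ∧ iSupIndep S ∧ ⨆ i, S i = ⊤ := by
  classical
  -- choose lifts of nonzero elements of each N i
  have h1 : ∀ i, ∃ ξ : ↥I₀', Submodule.Quotient.mk ξ ∈ N i ∧
      (Submodule.Quotient.mk ξ : ↥I₀' ⧸ Submodule.comap I₀'.subtype I₀) ≠ 0 := by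
    intro i
    obtain ⟨y, hy, hy0⟩ := (Submodule.ne_bot_iff _).mp (hbot i)
    obtain ⟨ξ, rfl⟩ := Submodule.Quotient.mk_surjective _ y
    exact ⟨ξ, hy, hy0⟩
  choose ξ hξN hξ0 using h1
  set x : Fin n → R := fun i => (ξ i : R) with hxdef
  have hxI₀' : ∀ i, x i ∈ I₀' := fun i => (ξ i).2
  have hxI₀ : ∀ i, x i ∉ I₀ := by
    intro i hmem
    exact hξ0 i (by rwa [Submodule.Quotient.mk_eq_zero])
  -- colon ideals and maximal ideals containing them
  set q : Fin n → Ideal R := fun i => Submodule.comap (LinearMap.toSpanSingleton R R (x i)) I₀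
    with hqdef
  have hq : ∀ i r, r ∈ q i ↔ r * x i ∈ I₀ := by
    intro i r
    simp [hqdef, LinearMap.toSpanSingleton_apply, smul_eq_mul]
  have hq_ne : ∀ i, q i ≠ ⊤ := by
    intro i h
    exact hxI₀ i (by simpa using (hq i 1).mp (h ▸ Submodule.mem_top))
  choose m hm_max hm_le using fun i => Ideal.exists_le_maximal (q i) (hq_ne i)
  -- the ideals
  set A : Fin n → Ideal R := fun i => I₀ ⊔ m i • Ideal.span {x i} with hAdef
  set B : Fin n → Ideal R := fun i => I₀ ⊔ Ideal.span {x i} with hBdef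
  have hAB : ∀ i, A i ≤ B i := fun i => sup_le_sup_left Submodule.smul_le_right _
  have hxB : ∀ i, x i ∈ B i := fun i =>
    le_sup_right (α := Ideal R) (Submodule.mem_span_singleton_self (x i))
  have hBle : ∀ i, B i ≤ I₀' := fun i =>
    sup_le hle ((Ideal.span_singleton_le_iff_mem _).mpr (hxI₀' i))
  have hI₀A : ∀ i, I₀ ≤ A i := fun i => le_sup_left
  -- mk of elements of B i lands in N i
  have hmkB : ∀ i, ∀ w, ∀ hw : w ∈ I₀', w ∈ B i →
      (Submodule.Quotient.mk ⟨w, hw⟩ : ↥I₀' ⧸ Submodule.comap I₀'.subtype I₀) ∈ N i := by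
    intro i w hw hwB
    obtain ⟨z, hz, s, hs, hws⟩ := Submodule.mem_sup.mp hwB
    obtain ⟨r, hr⟩ := Ideal.mem_span_singleton'.mp hs
    have hzw : (⟨w, hw⟩ : ↥I₀') = ⟨z, hle hz⟩ + r • ξ i := by
      ext
      simp [← hws, ← hr, hxdef, smul_eq_mul]
    rw [hzw, Submodule.Quotient.mk_add, Submodule.Quotient.mk_smul]
    have hz0 : (Submodule.Quotient.mk ⟨z, hle hz⟩ :
        ↥I₀' ⧸ Submodule.comap I₀'.subtype I₀) = 0 := by
      rwa [Submodule.Quotient.mk_eq_zero]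
    rw [hz0, zero_add]
    exact Submodule.smul_mem _ r (hξN i)
  -- the key lemma
  have hkey : ∀ i, ∀ w ∈ B i ⊓ (A i ⊔ ⨆ j, ⨆ _ : j ≠ i, B j), w ∈ A i := by
    intro i w hw
    obtain ⟨hwB, hw2⟩ := hw
    obtain ⟨a, ha, c, hc, hwac⟩ := Submodule.mem_sup.mp hw2
    have hsupLe : (⨆ j, ⨆ _ : j ≠ i, B j) ≤ I₀' :=
      iSup_le fun j => iSup_le fun _ => hBle j
    have hwI : w ∈ I₀' := hBle i hwB
    have haI : a ∈ I₀' := hBle i (hAB i ha)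
    have hcI : c ∈ I₀' := hsupLe hc
    have hcN : (Submodule.Quotient.mk ⟨c, hcI⟩ :
        ↥I₀' ⧸ Submodule.comap I₀'.subtype I₀) ∈ N i := by
      have h1 : (Submodule.Quotient.mk ⟨w, hwI⟩ :
          ↥I₀' ⧸ Submodule.comap I₀'.subtype I₀) ∈ N i := hmkB i w hwI hwB
      have h2 : (Submodule.Quotient.mk ⟨a, haI⟩ :
          ↥I₀' ⧸ Submodule.comap I₀'.subtype I₀) ∈ N i := hmkB i a haI (hAB i ha)
      have hca : (⟨c, hcI⟩ : ↥I₀') = ⟨w, hwI⟩ - ⟨a, haI⟩ := by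
        ext; simp [← hwac]
      rw [hca, Submodule.Quotient.mk_sub]
      exact Submodule.sub_mem _ h1 h2
    have hcSup : (Submodule.Quotient.mk ⟨c, hcI⟩ :
        ↥I₀' ⧸ Submodule.comap I₀'.subtype I₀) ∈ ⨆ j, ⨆ _ : j ≠ i, N j := by
      rw [iSup_subtype'] at hc ⊢
      exact aux_mk_iSup I₀' _ (fun j : {j // j ≠ i} => B j.1)
        (fun j => hBle j.1) _ (fun j w hw hwB => by
          exact Submodule.mem_iSup_of_mem j (hmkB j.1 w hw hwB)) c hcI hc
    have hc0 : (Submodule.Quotient.mk ⟨c, hcI⟩ :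
        ↥I₀' ⧸ Submodule.comap I₀'.subtype I₀) = 0 :=
      Submodule.disjoint_def.mp (hind i) _ hcN hcSup
    have hcI₀ : c ∈ I₀ := by rwa [Submodule.Quotient.mk_eq_zero] at hc0
    rw [← hwac]
    exact (A i).add_mem ha (hI₀A i hcI₀)
  -- define I and I'
  refine ⟨⨆ i, A i, ⨆ i, B i, iSup_mono hAB, ?_⟩
  set I : Ideal R := ⨆ i, A i with hIdef
  set I' : Ideal R := ⨆ i, B i with hI'def
  have hAI : ∀ i, A i ≤ I := le_iSup A
  have hII' : I ≤ I' := iSup_mono hAB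
  have hBI' : ∀ i, B i ≤ I' := le_iSup B
  have hxI' : ∀ i, x i ∈ I' := fun i => hBI' i (hxB i)
  have hI₀I : I₀ ≤ I := (hI₀A ⟨0, hn⟩).trans (hAI ⟨0, hn⟩)
  have hIle : ∀ i, I ≤ A i ⊔ ⨆ j, ⨆ _ : j ≠ i, B j := by
    intro i
    refine iSup_le fun j => ?_
    by_cases h : j = i
    · subst h; exact le_sup_left
    · exact le_trans (hAB j) (le_trans (le_iSup₂ (f := fun j _ => B j) j h) le_sup_right)
  have hIBA : ∀ i, ∀ w ∈ I, w ∈ B i → w ∈ A i := by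
    intro i w h1 h2
    exact hkey i w ⟨h2, hIle i h1⟩
  -- the maps φ i : R → I'/I
  set φ : Fin n → (R →ₗ[R] (↥I' ⧸ Submodule.comap I'.subtype I)) := fun i =>
    (Submodule.comap I'.subtype I).mkQ ∘ₗ LinearMap.toSpanSingleton R ↥I' ⟨x i, hxI' i⟩
    with hφdef
  have hφ_apply : ∀ i r, φ i r = Submodule.Quotient.mk ⟨r * x i,
      I'.mul_mem_left r (hxI' i)⟩ := by
    intro i r
    rfl
  have hrxB : ∀ i (r : R), r * x i ∈ B i := fun i r => (B i).mul_mem_left r (hxB i)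
  -- kernel of φ i is m i
  have hφker : ∀ i, LinearMap.ker (φ i) = (m i : Submodule R R) := by
    intro i
    ext r
    simp only [LinearMap.mem_ker, hφ_apply, Submodule.Quotient.mk_eq_zero, Submodule.mem_comap]
    constructor
    · intro hr
      have hr' : r * x i ∈ I := hr
      have hrA : r * x i ∈ A i := hIBA i _ hr' (hrxB i r)
      obtain ⟨z, hz, s, hs, hzs⟩ := Submodule.mem_sup.mp hrA
      obtain ⟨t, ht, hts⟩ := Submodule.mem_smul_span_singleton.mp hs
      have hts' : t * x i = s := by rw [← hts, smul_eq_mul]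
      have h2 : (r - t) * x i ∈ I₀ := by
        have heq : (r - t) * x i = z := by
          rw [sub_mul, hts']
          linear_combination -hzs
        rwa [heq]
      have h3 : r - t ∈ m i := hm_le i ((hq i _).mpr h2)
      simpa using (m i).add_mem h3 ht
    · intro hr
      show r * x i ∈ I
      refine hAI i ?_
      exact le_sup_right (α := Ideal R)
        (Submodule.mem_smul_span_singleton.mpr ⟨r, hr, smul_eq_mul (α := R) _ _⟩)
  -- the submodules S i
  refine ⟨fun i => LinearMap.range (φ i), ?_, ?_, ?_⟩
  · -- simplicity
    intro i
    have hco : IsCoatom (m i : Submodule R R) := (Ideal.isMaximal_def).mp (hm_max i)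
    have h2 : IsSimpleModule R (R ⧸ LinearMap.ker (φ i)) := by
      rw [hφker i]
      exact isSimpleModule_iff_isCoatom.mpr hco
    exact IsSimpleModule.congr (φ i).quotKerEquivRange.symm
  · -- independence
    intro i
    rw [Submodule.disjoint_def]
    intro v hv1 hv2
    obtain ⟨r, rfl⟩ := hv1
    -- v ∈ image of ⨆_{j≠i} B j
    set T : Submodule R (↥I' ⧸ Submodule.comap I'.subtype I) :=
      Submodule.map (Submodule.comap I'.subtype I).mkQ
        (Submodule.comap I'.subtype (⨆ j, ⨆ _ : j ≠ i, B j)) with hTdef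
    have hT : (⨆ j, ⨆ _ : j ≠ i, LinearMap.range (φ j)) ≤ T := by
      refine iSup_le fun j => iSup_le fun hj => ?_
      rintro _ ⟨r', rfl⟩
      rw [hφ_apply]
      refine ⟨⟨r' * x j, I'.mul_mem_left r' (hxI' j)⟩, ?_, rfl⟩
      exact Submodule.mem_comap.mpr ((le_iSup₂ (f := fun j _ => B j) j hj) (hrxB j r'))
    obtain ⟨⟨c, hcI'⟩, hcmem, hceq⟩ := hT hv2
    have hsub : c - r * x i ∈ I := by
      have := (Submodule.Quotient.eq _).mp (hceq.trans (hφ_apply i r))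
      simpa using this
    have hrx : r * x i ∈ A i := by
      refine hkey i _ ⟨hrxB i r, ?_⟩
      have h1 : r * x i = (-(c - r * x i)) + c := by ring
      rw [h1]
      refine Submodule.add_mem _ ?_ ?_
      · exact hIle i (I.neg_mem hsub)
      · exact le_sup_right (α := Ideal R) hcmem
    rw [hφ_apply, Submodule.Quotient.mk_eq_zero]
    exact Submodule.mem_comap.mpr (hAI i hrx)
  · -- supremum is top
    rw [eq_top_iff]
    rintro v -
    obtain ⟨⟨w, hwI'⟩, rfl⟩ := Submodule.Quotient.mk_surjective _ v
    refine aux_mk_iSup I' _ B hBI' _ ?_ w hwI' hwI'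
    intro j w hw hwB
    obtain ⟨z, hz, s, hs, hws⟩ := Submodule.mem_sup.mp hwB
    obtain ⟨r, hr⟩ := Ideal.mem_span_singleton'.mp hs
    have hzw : (⟨w, hw⟩ : ↥I') = ⟨z, hII' (hI₀I hz)⟩ + ⟨r * x j, I'.mul_mem_left r (hxI' j)⟩ := by
      ext
      simp [← hws, ← hr]
    rw [hzw, Submodule.Quotient.mk_add]
    have hz0 : (Submodule.Quotient.mk ⟨z, hII' (hI₀I hz)⟩ :
        ↥I' ⧸ Submodule.comap I'.subtype I) = 0 := by
      rw [Submodule.Quotient.mk_eq_zero]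
      exact hI₀I hz
    rw [hz0, zero_add, ← hφ_apply]
    exact Submodule.mem_iSup_of_mem j ⟨r, rfl⟩
end

section
/- Let R be a Noetherian integral domain with finitely many maximal ideals and Krull dimension at most 1. Let x be a nonzero element of the Jacobson radical of R. Then the R-module R/xR has finite length m, and R has breadth at most m: for any x₁, …, x_{m+1} ∈ R there is some i such that the ideal generated by {x₁, …, x_{m+1}} equals the ideal generated by {x₁, …, x_{m+1}} \ {x_i}. -/
open Pointwise

section CovByChains

variable {α : Type*} [PartialOrder α] [WellFoundedLT α] [WellFoundedGT α]

/-- In a partial order well-founded in both directions, between any `A ≤ B` there is a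
covering chain. -/
lemma aux_exists_covBy_chain (B : α) :
    ∀ A : α, A ≤ B → ∃ t : RelSeries {(a, b) : α × α | a ⋖ b}, t.head = A ∧ t.last = B := by
  intro A
  refine WellFounded.induction (C := fun A : α => A ≤ B →
    ∃ t : RelSeries {(a, b) : α × α | a ⋖ b}, t.head = A ∧ t.last = B)
    (wellFounded_gt) A ?_
  intro A IH hAB
  rcases eq_or_lt_of_le hAB with rfl | hlt
  · exact ⟨RelSeries.singleton _ A, by simp, by simp⟩
  · have hne : {C : α | A < C ∧ C ≤ B}.Nonempty := ⟨B, hlt, le_rfl⟩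
    have hmem := wellFounded_lt.min_mem _ hne
    have hcov : A ⋖ wellFounded_lt.min {C : α | A < C ∧ C ≤ B} hne :=
      ⟨hmem.1, fun D hAD hDC => wellFounded_lt.not_lt_min {C : α | A < C ∧ C ≤ B}
        (show D ∈ {C : α | A < C ∧ C ≤ B} from ⟨hAD, hDC.le.trans hmem.2⟩) hDC⟩
    obtain ⟨t, ht1, ht2⟩ := IH _ hmem.1 hmem.2
    exact ⟨t.cons A (ht1 ▸ hcov), by simp, by simp [ht2]⟩

/-- A strictly monotone chain can be refined to a covering chain of length at least as long. -/
lemma aux_exists_covBy_chain_of_strictMono :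
    ∀ (n : ℕ) (g : Fin (n + 1) → α), StrictMono g →
      ∃ t : RelSeries {(a, b) : α × α | a ⋖ b},
        t.head = g 0 ∧ t.last = g (Fin.last n) ∧ n ≤ t.length := by
  intro n
  induction n with
  | zero =>
      intro g _
      exact ⟨RelSeries.singleton _ (g 0), by simp, by simp, Nat.zero_le _⟩
  | succ n IH =>
      intro g hg
      obtain ⟨t, ht1, ht2, ht3⟩ := IH (fun i => g i.castSucc)
        (fun _ _ h => hg (by simpa using h))
      obtain ⟨u, hu1, hu2⟩ := aux_exists_covBy_chain (g (Fin.last (n+1)))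
        (g ((Fin.last n).castSucc)) (hg (Fin.castSucc_lt_last _)).le
      have hconn : t.last = u.head := by rw [ht2, hu1]
      have hulen : u.length ≠ 0 := by
        intro h0
        have : u.head = u.last := congrArg u (Fin.ext (by simp [h0]))
        rw [hu1, hu2] at this
        exact (hg (Fin.castSucc_lt_last (Fin.last n))).ne this
      refine ⟨t.smash u hconn, ?_, ?_, ?_⟩
      · rw [RelSeries.head_smash, ht1]
        simp
      · rw [RelSeries.last_smash, hu2]
      · have hL : (t.smash u hconn).length = t.length + u.length := rfl
        omega

end CovByChains

section Transfer

variable {R M : Type*} [CommRing R] [AddCommGroup M] [Module R M]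

/-- `comap` along the quotient map transfers covers of submodules of the quotient to covers
of submodules. -/
lemma aux_comap_mkQ_covBy {N : Submodule R M} {A B : Submodule R (M ⧸ N)} (h : A ⋖ B) :
    A.comap N.mkQ ⋖ B.comap N.mkQ := by
  let f : Submodule R (M ⧸ N) ↪o Submodule R M :=
    { toFun := fun P => P.comap N.mkQ
      inj' := Submodule.comap_injective_of_surjective N.mkQ_surjective
      map_rel_iff' := fun {P Q} =>
        Submodule.comap_le_comap_iff_of_surjective N.mkQ_surjective }
  have hrange : Set.range f = Set.Ici N := by
    ext S
    constructor
    · rintro ⟨P, rfl⟩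
      have := Submodule.comap_mono (bot_le : (⊥ : Submodule R (M ⧸ N)) ≤ P) (f := N.mkQ)
      rwa [Submodule.comap_bot, Submodule.ker_mkQ] at this
    · intro hS
      refine ⟨Submodule.map N.mkQ S, ?_⟩
      show Submodule.comap N.mkQ (Submodule.map N.mkQ S) = S
      rw [Submodule.comap_map_eq, Submodule.ker_mkQ, sup_eq_left.mpr hS]
  exact (Set.OrdConnected.apply_covBy_apply_iff f (hrange ▸ Set.ordConnected_Ici)).mpr h

end Transfer

section SmulCovBy

/-- Multiplication by a nonzero element of a domain transfers covers of ideals to covers. -/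
lemma aux_smul_covBy {R : Type*} [CommRing R] [IsDomain R] {x : R} (hx : x ≠ 0)
    {A B : Ideal R} (h : A ⋖ B) : x • A ⋖ x • B := by
  let f : R →ₗ[R] R := DistribMulAction.toLinearMap R R x
  have hfinj : Function.Injective f := fun a b hab => by
    exact mul_left_cancel₀ hx hab
  have hmap : ∀ C : Ideal R, x • C = Submodule.map f C := fun C => rfl
  have hcomap : ∀ C : Ideal R, Submodule.comap f (Submodule.map f C) = C := fun C =>
    Submodule.comap_map_eq_of_injective hfinj C
  constructor
  · refine lt_of_le_of_ne (by rw [hmap, hmap]; exact Submodule.map_mono h.1.le) ?_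
    intro he
    rw [hmap, hmap] at he
    exact h.1.ne (by rw [← hcomap A, ← hcomap B, he])
  · intro C hAC hCB
    have hCrange : C ≤ LinearMap.range f := by
      refine le_trans hCB.le ?_
      rw [hmap, LinearMap.range_eq_map]
      exact Submodule.map_mono le_top
    have hmapC : Submodule.map f (Submodule.comap f C) = C := by
      rw [Submodule.map_comap_eq, inf_eq_right.mpr hCrange]
    have h1 : A < Submodule.comap f C := by
      refine lt_of_le_of_ne ?_ ?_
      · rw [← hcomap A]
        exact Submodule.comap_mono (le_of_lt (hmap A ▸ hAC))
      · intro he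
        exact hAC.ne (by rw [hmap, he, hmapC])
    have h2 : Submodule.comap f C < B := by
      refine lt_of_le_of_ne ?_ ?_
      · rw [← hcomap B]
        exact Submodule.comap_mono (le_of_lt (hmap B ▸ hCB))
      · intro he
        exact hCB.ne (by rw [← hmapC, he, ← hmap])
    exact h.2 h1 h2

end SmulCovBy

section Hopkins

universe v

variable {R : Type*} [CommRing R]

/-- A Noetherian module annihilated by a maximal ideal is Artinian. -/
lemma aux_isArtinian_of_isMaximal_smul {M : Type v} [AddCommGroup M] [Module R M]
    [IsNoetherian R M] {m : Ideal R} (hm : m.IsMaximal)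
    (h : m • (⊤ : Submodule R M) = ⊥) : IsArtinian R M := by
  have : Module.Finite R M := ⟨IsNoetherian.noetherian ⊤⟩
  have : IsSemisimpleModule R M := by
    apply IsSemisimpleModule.of_sSup_simples_eq_top
    rw [eq_top_iff]
    intro v _
    by_cases hv : v = 0
    · subst hv; exact zero_mem _
    · refine le_sSup (s := {S : Submodule R M | IsSimpleModule R S}) ?_
        (Submodule.mem_span_singleton_self v)
      have hker : LinearMap.ker (LinearMap.toSpanSingleton R M v) = m := by
        refine (hm.eq_of_le ?_ ?_).symm
        · intro he
          apply hv
          have h1 : (1 : R) ∈ LinearMap.ker (LinearMap.toSpanSingleton R M v) := by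
            rw [he]; trivial
          simpa using h1
        · intro r hr
          have : r • v ∈ m • (⊤ : Submodule R M) := Submodule.smul_mem_smul hr trivial
          rw [h] at this
          simpa using this
      have hsimple : IsSimpleModule R (R ⧸ LinearMap.ker (LinearMap.toSpanSingleton R M v)) := by
        rw [hker]
        exact isSimpleModule_iff_isCoatom.mpr (Ideal.isMaximal_def.mp hm)
      show IsSimpleModule R (Submodule.span R {v})
      rw [show Submodule.span R {v} = (R ∙ v) from rfl,
        LinearMap.span_singleton_eq_range]
      exact IsSimpleModule.congr (LinearMap.toSpanSingleton R M v).quotKerEquivRange.symm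
  infer_instance

/-- Hopkins-style lemma: a Noetherian module annihilated by a finite product of maximal
ideals is Artinian. -/
lemma aux_isArtinian_of_multiset_prod_smul (L : Multiset (Ideal R)) :
    ∀ {M : Type v} [AddCommGroup M] [Module R M] [IsNoetherian R M],
      (∀ p ∈ L, p.IsMaximal) → (L.prod • (⊤ : Submodule R M) = ⊥) → IsArtinian R M := by
  induction L using Multiset.induction_on with
  | empty =>
      intro M _ _ _ _ h
      rw [Multiset.prod_zero, Ideal.one_eq_top, Submodule.top_smul] at h
      have : Subsingleton M := by
        constructor
        intro a b
        have ha : a ∈ (⊥ : Submodule R M) := h ▸ Submodule.mem_top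
        have hb : b ∈ (⊥ : Submodule R M) := h ▸ Submodule.mem_top
        simp only [Submodule.mem_bot] at ha hb
        rw [ha, hb]
      exact isArtinian_of_finite
  | cons p L IH =>
      intro M _ _ _ hmax h
      rw [Multiset.prod_cons] at h
      set N : Submodule R M := p • ⊤ with hN
      have hNart : IsArtinian R N := by
        refine IH (fun q hq => hmax q (Multiset.mem_cons_of_mem hq)) ?_
        apply Submodule.map_injective_of_injective N.injective_subtype
        rw [Submodule.map_smul'', Submodule.map_subtype_top, Submodule.map_bot, hN,
          ← Submodule.smul_assoc, Ideal.smul_eq_mul, mul_comm, ← h]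
      have hQart : IsArtinian R (M ⧸ N) := by
        refine aux_isArtinian_of_isMaximal_smul (hmax p (Multiset.mem_cons_self p L)) ?_
        have : p • (⊤ : Submodule R (M ⧸ N)) = Submodule.map N.mkQ (p • ⊤) := by
          rw [Submodule.map_smul'', Submodule.map_top, Submodule.range_mkQ]
        rw [this, ← hN]
        rw [show Submodule.map N.mkQ N = ⊥ by
          rw [eq_bot_iff]
          rintro z ⟨n, hn, rfl⟩
          simpa using (Submodule.Quotient.mk_eq_zero N).mpr hn]
      exact (isArtinian_iff_submodule_quotient N).mpr ⟨hNart, hQart⟩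

end Hopkins

section Dim

/-- In a domain of Krull dimension at most 1, nonzero primes are maximal. -/
lemma aux_isMaximal_of_prime {R : Type*} [CommRing R] [IsDomain R]
    (hdim : ringKrullDim R ≤ 1) {p : Ideal R} (hp : p.IsPrime) (hp0 : p ≠ ⊥) :
    p.IsMaximal := by
  obtain ⟨mI, hmI, hpm⟩ := p.exists_le_maximal hp.ne_top
  by_cases h : p = mI
  · exact h ▸ hmI
  · exfalso
    have hlt1 : (⊥ : Ideal R) < p := bot_lt_iff_ne_bot.mpr hp0
    have hlt2 : p < mI := lt_of_le_of_ne hpm h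
    let c : LTSeries (PrimeSpectrum R) :=
      ⟨2, ![⟨⊥, Ideal.bot_prime⟩, ⟨p, hp⟩, ⟨mI, hmI.isPrime⟩], by
        intro i
        fin_cases i
        · exact hlt1
        · exact hlt2⟩
    have hle := Order.LTSeries.length_le_krullDim c
    have : (2 : WithBot (WithTop ℕ)) ≤ 1 := le_trans hle hdim
    norm_num at this

end Dim

section QuotArtinian

/-- In a Noetherian domain of dimension at most one which is not a field, the quotient by a
nonzero ideal is an Artinian module. -/
lemma aux_isArtinian_quotient {R : Type*} [CommRing R] [IsDomain R] [IsNoetherianRing R]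
    (hfield : ¬IsField R) (hdim : ringKrullDim R ≤ 1) {J : Ideal R} (hJ : J ≠ ⊥) :
    IsArtinian R (R ⧸ J) := by
  obtain ⟨Z, hZle, hZne⟩ := PrimeSpectrum.exists_primeSpectrum_prod_le_and_ne_bot_of_domain hfield hJ
  set P : Ideal R := (Z.map PrimeSpectrum.asIdeal).prod with hP
  have hart : IsArtinian R (R ⧸ P) := by
    refine aux_isArtinian_of_multiset_prod_smul (Z.map PrimeSpectrum.asIdeal) ?_ ?_
    · intro q hq
      obtain ⟨pt, hpt, rfl⟩ := Multiset.mem_map.mp hq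
      refine aux_isMaximal_of_prime hdim pt.isPrime ?_
      intro hbot
      apply hZne
      have hmem : (0 : Ideal R) ∈ Z.map PrimeSpectrum.asIdeal := by
        rw [Submodule.zero_eq_bot, ← hbot]
        exact Multiset.mem_map_of_mem _ hpt
      rw [hP, ← Submodule.zero_eq_bot]
      exact Multiset.prod_eq_zero hmem
    · have h1 : (⊤ : Submodule R (R ⧸ P)) = Submodule.map P.mkQ ⊤ := by
        rw [Submodule.map_top, Submodule.range_mkQ]
      rw [h1, ← Submodule.map_smul'']
      have h2 : P • (⊤ : Ideal R) = P := by
        rw [Ideal.smul_eq_mul, Ideal.mul_top]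
      rw [h2]
      rw [eq_bot_iff]
      rintro z ⟨n, hn, rfl⟩
      simpa using (Submodule.Quotient.mk_eq_zero P).mpr hn
  have hle' : P ≤ Submodule.comap (LinearMap.id : R →ₗ[R] R) J := hZle
  refine isArtinian_of_surjective (R ⧸ P) (Submodule.mapQ P J LinearMap.id hle') ?_
  intro z
  obtain ⟨r, rfl⟩ := J.mkQ_surjective z
  exact ⟨P.mkQ r, by rw [Submodule.mkQ_apply, Submodule.mkQ_apply, Submodule.mapQ_apply]; rfl⟩

end QuotArtinian

/-- Turn a covering `RelSeries` of submodules into a `CompositionSeries`. -/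
def aux_toCS {R M : Type*} [CommRing R] [AddCommGroup M] [Module R M]
    (t : RelSeries {(a, b) : Submodule R M × Submodule R M | a ⋖ b}) :
    CompositionSeries (Submodule R M) :=
  ⟨t.length, t.toFun, t.step⟩

/-- Let `R` be a Noetherian domain with finitely many maximal ideals and Krull dimension
at most 1, and let `x` be a nonzero element of the Jacobson radical of `R`.  Then `R/xR`
has finite length `m` (witnessed by a composition series from `⊥` to `⊤` of length `m`),
and `R` has breadth at most `m`. -/
theorem breadth_le_length_of_jacobson {R : Type*} [CommRing R] [IsDomain R]
    [IsNoetherianRing R]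
    (hsemilocal : {I : Ideal R | I.IsMaximal}.Finite)
    (hdim : ringKrullDim R ≤ 1)
    (x : R) (hx0 : x ≠ 0) (hxJ : x ∈ Ideal.jacobson (⊥ : Ideal R)) :
    ∃ m : ℕ,
      (∃ s : CompositionSeries (Submodule R (R ⧸ Ideal.span {x})),
        s.head = ⊥ ∧ s.last = ⊤ ∧ s.length = m) ∧
      ∀ y : Fin (m + 1) → R, ∃ i,
        Ideal.span (y '' {j | j ≠ i}) = Ideal.span (Set.range y) := by
  classical
  have hfield : ¬IsField R := by
    intro hf
    letI := hf.toField
    have hbot : Ideal.jacobson (⊥ : Ideal R) ≤ ⊥ :=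
      sInf_le ⟨le_rfl, Ideal.bot_isMaximal⟩
    exact hx0 (Ideal.mem_bot.mp (hbot hxJ))
  have hxIdeal : (Ideal.span {x} : Ideal R) ≠ ⊥ := by
    simpa [Ideal.span_singleton_eq_bot] using hx0
  haveI hax : IsArtinian R (R ⧸ (Ideal.span {x} : Ideal R)) :=
    aux_isArtinian_quotient hfield hdim hxIdeal
  obtain ⟨s, hs1, hs2⟩ :=
    exists_compositionSeries_of_isNoetherian_isArtinian R (R ⧸ (Ideal.span {x} : Ideal R))
  refine ⟨s.length, ⟨s, hs1, hs2, rfl⟩, ?_⟩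
  set m := s.length with hm
  intro y
  set I : Ideal R := Ideal.span (Set.range y) with hI
  by_cases hIbot : I = ⊥
  · refine ⟨0, le_antisymm (Ideal.span_mono (Set.image_subset_range _ _)) ?_⟩
    rw [hIbot]
    exact bot_le
  by_contra hcon
  push_neg at hcon
  -- basic objects
  set K : Fin (m + 1) → Ideal R := fun i => Ideal.span (y '' {j | j ≠ i}) with hK
  have hKI : ∀ i, K i ≤ I := fun i => Ideal.span_mono (Set.image_subset_range _ _)
  set W : Ideal R := x • I with hW
  have hWspan : W = (Ideal.span {x} : Ideal R) • I := by
    rw [hW, Submodule.ideal_span_singleton_smul]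
  have hWI : W ≤ I := by
    rw [hWspan]; exact Submodule.smul_le_right
  have hWbot : W ≠ ⊥ := by
    obtain ⟨a, haI, ha0⟩ := Submodule.exists_mem_ne_zero_of_ne_bot hIbot
    intro hbot
    have : x • a ∈ W := by
      rw [hW]
      exact Submodule.smul_mem_pointwise_smul a x I haI
    rw [hbot] at this
    simp only [Submodule.mem_bot, smul_eq_mul] at this
    exact ha0 ((mul_eq_zero.mp this).resolve_left hx0)
  -- Nakayama: no `y i` lies in `K i ⊔ W`
  have hyi : ∀ i, y i ∉ K i ⊔ W := by
    intro i hmem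
    have hle : I ≤ K i ⊔ (Ideal.jacobson (⊥ : Ideal R)) • I := by
      rw [hI]
      rw [Ideal.span_le]
      rintro a ⟨j, rfl⟩
      by_cases hj : j = i
      · subst hj
        refine SetLike.le_def.mp (sup_le_sup_left ?_ (K j)) hmem
        rw [hWspan]
        exact Submodule.smul_mono_left (Ideal.span_le.mpr (by simpa using hxJ))
      · exact Submodule.mem_sup_left
          (Ideal.subset_span (Set.mem_image_of_mem y (by exact hj)))
    have := Submodule.le_of_le_smul_of_le_jacobson_bot (IsNoetherian.noetherian I) le_rfl hle
    exact hcon i (le_antisymm (hKI i) this)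
  -- the strictly increasing chain of ideals between `W` and `I`
  set C : Fin (m + 2) → Ideal R :=
    fun k => Ideal.span (y '' {j | (j : ℕ) < (k : ℕ)}) ⊔ W with hC
  have hC0 : C 0 = W := by
    rw [hC]
    simp
  have hClast : C (Fin.last (m + 1)) = I := by
    apply le_antisymm
    · exact sup_le (Ideal.span_mono (Set.image_subset_range _ _)) hWI
    · rw [hI]
      refine le_trans (Ideal.span_mono ?_) le_sup_left
      rintro a ⟨j, rfl⟩
      exact ⟨j, by simpa using j.isLt, rfl⟩
  have hWC : ∀ k, W ≤ C k := fun k => le_sup_right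
  have hCmono : StrictMono C := by
    have hstep : ∀ a b : Fin (m + 2), a < b → C a < C b := by
      intro a b hab
      have hle : C a ≤ C b := by
        rw [hC]
        refine sup_le_sup_right (Ideal.span_mono (Set.image_mono ?_)) W
        intro j hj
        simp only [Set.mem_setOf_eq] at hj ⊢
        exact lt_of_lt_of_le hj (Fin.le_def.mp hab.le)
      refine lt_of_le_of_ne hle ?_
      intro he
      have haval : (a : ℕ) < m + 1 := lt_of_lt_of_le hab (Nat.lt_succ_iff.mp b.isLt)
      set j0 : Fin (m + 1) := ⟨(a : ℕ), haval⟩ with hj0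
      have himg : y j0 ∈ y '' {j : Fin (m + 1) | (j : ℕ) < (b : ℕ)} :=
        Set.mem_image_of_mem y (by exact hab)
      have hmem : y j0 ∈ C b := Submodule.mem_sup_left (Ideal.subset_span himg)
      rw [← he] at hmem
      apply hyi j0
      have hsub : C a ≤ K j0 ⊔ W := by
        rw [hC, hK]
        refine sup_le_sup_right (Ideal.span_mono (Set.image_mono ?_)) W
        intro j hj
        simp only [Set.mem_setOf_eq] at hj ⊢
        intro hjeq
        rw [hjeq] at hj
        exact lt_irrefl _ hj
      exact hsub hmem
    exact fun a b hab => hstep a b hab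
  -- instances for the quotients
  haveI haW : IsArtinian R (R ⧸ W) := aux_isArtinian_quotient hfield hdim hWbot
  haveI haI2 : IsArtinian R (R ⧸ I) := aux_isArtinian_quotient hfield hdim hIbot
  -- refine the chain in `Submodule R (R ⧸ W)`
  set g : Fin (m + 2) → Submodule R (R ⧸ W) := fun k => Submodule.map W.mkQ (C k) with hg
  have hgmono : StrictMono g := by
    intro a b hab
    have hlt := hCmono hab
    refine lt_of_le_of_ne (Submodule.map_mono hlt.le) ?_
    intro he
    apply hlt.ne
    have h1 := congrArg (Submodule.comap W.mkQ) he
    rw [Submodule.comap_map_eq, Submodule.comap_map_eq, Submodule.ker_mkQ,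
      sup_eq_left.mpr (hWC a), sup_eq_left.mpr (hWC b)] at h1
    exact h1
  obtain ⟨t, ht1, ht2, ht3⟩ := aux_exists_covBy_chain_of_strictMono (m + 1) g hgmono
  -- transfer the refined chain back to ideals of `R`
  let tcomap : RelSeries {(a, b) : Ideal R × Ideal R | a ⋖ b} :=
    t.map ⟨fun P => Submodule.comap W.mkQ P, fun h => aux_comap_mkQ_covBy h⟩
  have htc_head : tcomap.head = W := by
    show Submodule.comap W.mkQ t.head = W
    rw [ht1, hg]
    rw [Submodule.comap_map_eq, Submodule.ker_mkQ, sup_eq_left.mpr (hWC 0), hC0]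
  have htc_last : tcomap.last = I := by
    show Submodule.comap W.mkQ t.last = I
    rw [ht2, hg]
    rw [Submodule.comap_map_eq, Submodule.ker_mkQ,
      sup_eq_left.mpr (hWC (Fin.last (m+1))), hClast]
  -- composition series from `I` to `⊤` in `Ideal R`
  obtain ⟨u, hu1, hu2⟩ :=
    exists_compositionSeries_of_isNoetherian_isArtinian R (R ⧸ I)
  let uc : RelSeries {(a, b) : Ideal R × Ideal R | a ⋖ b} :=
    ⟨u.length, fun i => Submodule.comap I.mkQ (u i), fun i => aux_comap_mkQ_covBy (u.step i)⟩
  have huc_head : uc.head = I := by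
    show Submodule.comap I.mkQ u.head = I
    rw [hu1, Submodule.comap_bot, Submodule.ker_mkQ]
  have huc_last : uc.last = ⊤ := by
    show Submodule.comap I.mkQ u.last = ⊤
    rw [hu2, Submodule.comap_top]
  -- composition series from `span {x}` to `⊤` in `Ideal R`
  let sc : RelSeries {(a, b) : Ideal R × Ideal R | a ⋖ b} :=
    ⟨s.length, fun i => Submodule.comap (Ideal.span {x} : Ideal R).mkQ (s i),
      fun i => aux_comap_mkQ_covBy (s.step i)⟩
  have hsc_head : sc.head = Ideal.span {x} := by
    show Submodule.comap (Ideal.span {x} : Ideal R).mkQ s.head = Ideal.span {x}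
    rw [hs1, Submodule.comap_bot, Submodule.ker_mkQ]
  have hsc_last : sc.last = ⊤ := by
    show Submodule.comap (Ideal.span {x} : Ideal R).mkQ s.last = ⊤
    rw [hs2, Submodule.comap_top]
  -- multiply `uc` by `x` : covering chain from `W` to `span {x}`
  let xc : RelSeries {(a, b) : Ideal R × Ideal R | a ⋖ b} :=
    uc.map ⟨fun P => x • P, fun h => aux_smul_covBy hx0 h⟩
  have hxc_head : xc.head = W := by
    show x • uc.head = W
    rw [huc_head, hW]
  have hxc_last : xc.last = Ideal.span {x} := by
    show x • uc.last = Ideal.span {x}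
    rw [huc_last]
    ext a
    constructor
    · rintro ⟨b, -, rfl⟩
      exact Ideal.mem_span_singleton.mpr ⟨b, rfl⟩
    · intro ha
      obtain ⟨b, rfl⟩ := Ideal.mem_span_singleton.mp ha
      exact ⟨b, trivial, rfl⟩
  -- assemble the two composition series and apply Jordan-Hölder
  have hconnA : xc.last = sc.head := by rw [hxc_last, hsc_head]
  have hconnB : tcomap.last = uc.head := by rw [htc_last, huc_head]
  let A : CompositionSeries (Submodule R R) := aux_toCS (xc.smash sc hconnA)
  let B : CompositionSeries (Submodule R R) := aux_toCS (tcomap.smash uc hconnB)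
  have hhead : A.head = B.head := by
    show (xc.smash sc hconnA).head = (tcomap.smash uc hconnB).head
    rw [RelSeries.head_smash, RelSeries.head_smash, hxc_head, htc_head]
  have hlast : A.last = B.last := by
    show (xc.smash sc hconnA).last = (tcomap.smash uc hconnB).last
    rw [RelSeries.last_smash, RelSeries.last_smash, hsc_last, huc_last]
  have hequiv := CompositionSeries.jordan_holder A B hhead hlast
  have hlen := hequiv.length_eq
  have hA : A.length = u.length + m := by
    show xc.length + sc.length = u.length + m
    rfl
  have hB : B.length = t.length + u.length := by
    show tcomap.length + uc.length = t.length + u.length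
    rfl
  rw [hA, hB] at hlen
  omega
end

section
/- Let R be a Noetherian integral domain with finitely many maximal ideals and Krull dimension at most 1. Then R has finite breadth: there exists n ∈ ℕ such that for all x₁, …, x_{n+1} ∈ R there is some i such that the ideal generated by {x₁, …, x_{n+1}} equals the ideal generated by {x₁, …, x_{n+1}} \ {x_i}. -/
open Order

namespace FiniteBreadthAux

variable {R : Type*} [CommRing R]

/-- All strict chains of ideals lying between `A` and `B` have length at most `n`. -/
def Bdd (A B : Ideal R) (n : ℕ) : Prop :=
  ∀ p : LTSeries (Ideal R), A ≤ p.head → p.last ≤ B → p.length ≤ n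

lemma bdd_mono {A A' B B' : Ideal R} {n : ℕ} (h : Bdd A B n) (hA : A ≤ A') (hB : B' ≤ B) :
    Bdd A' B' n := fun p h1 h2 => h p (hA.trans h1) (h2.trans hB)

lemma bdd_self (B : Ideal R) : Bdd B B 0 := by
  intro p h1 h2
  by_contra hc
  have hlt : p.head < p.last := p.strictMono (by
    show (0 : Fin _) < Fin.last _
    rw [Fin.lt_iff_val_lt_val]
    simp only [Fin.val_zero, Fin.val_last]
    omega)
  exact absurd ((h1.trans_lt hlt).trans_le h2) (lt_irrefl B)

lemma modular_eq {α : Type*} [Lattice α] [IsModularLattice α] {a b c : α} (hab : a ≤ b)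
    (h1 : a ⊓ c = b ⊓ c) (h2 : a ⊔ c = b ⊔ c) : a = b := by
  symm
  calc b = (b ⊔ c) ⊓ b := (inf_eq_right.mpr le_sup_left).symm
    _ = (a ⊔ c) ⊓ b := by rw [h2]
    _ = a ⊔ c ⊓ b := sup_inf_assoc_of_le c hab
    _ = a ⊔ b ⊓ c := by rw [inf_comm]
    _ = a ⊔ a ⊓ c := by rw [← h1]
    _ = a := sup_eq_left.mpr inf_le_left

lemma extend {α : Type*} [PartialOrder α] (p : LTSeries α) (w : α) (h : p.last ≤ w) :
    ∃ q : LTSeries α, q.head = p.head ∧ q.last = w ∧ p.length ≤ q.length := by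
  rcases eq_or_lt_of_le h with h' | h'
  · exact ⟨p, rfl, h', le_rfl⟩
  · exact ⟨p.snoc w h', p.head_snoc w h', p.last_snoc w h', by simp⟩

lemma extractAux {α β : Type*} [PartialOrder α] [PartialOrder β] :
    ∀ (n : ℕ) (p : LTSeries (α × β)), p.length = n →
    ∃ (q : LTSeries α) (r : LTSeries β),
      q.head = p.head.1 ∧ q.last = p.last.1 ∧ r.head = p.head.2 ∧ r.last = p.last.2 ∧
      p.length ≤ q.length + r.length := by
  intro n
  induction n with
  | zero =>
    intro p hn
    have hl : p.last = p.head := by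
      show p _ = p _
      congr 1
      ext
      simp [hn]
    exact ⟨RelSeries.singleton _ p.head.1, RelSeries.singleton _ p.head.2, rfl,
      by rw [hl]; rfl, rfl, by rw [hl]; rfl, by omega⟩
  | succ n ih =>
    intro p hn
    have hel : p.eraseLast.length = n := by
      show p.length - 1 = n
      omega
    obtain ⟨q, r, hqh, hql, hrh, hrl, hlen⟩ := ih p.eraseLast hel
    have hlast : p.eraseLast.last < p.last := p.eraseLast_last_rel_last (by omega)
    have hle := Prod.le_def.mp hlast.le
    have hheads : p.eraseLast.head = p.head := p.head_eraseLast
    rcases Prod.lt_iff.mp hlast with ⟨hs1, _⟩ | ⟨_, hs2⟩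
    · have hq' : q.last < p.last.1 := by rw [hql]; exact hs1
      obtain ⟨r', hr'h, hr'l, hr'len⟩ := extend r p.last.2 (by rw [hrl]; exact hle.2)
      exact ⟨q.snoc p.last.1 hq', r',
        by rw [RelSeries.head_snoc, hqh, hheads],
        by rw [RelSeries.last_snoc],
        by rw [hr'h, hrh, hheads], hr'l, by
          have : (q.snoc p.last.1 hq').length = q.length + 1 := by simp
          omega⟩
    · have hr' : r.last < p.last.2 := by rw [hrl]; exact hs2
      obtain ⟨q', hq'h, hq'l, hq'len⟩ := extend q p.last.1 (by rw [hql]; exact hle.1)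
      exact ⟨q', r.snoc p.last.2 hr',
        by rw [hq'h, hqh, hheads], hq'l,
        by rw [RelSeries.head_snoc, hrh, hheads],
        by rw [RelSeries.last_snoc], by
          have : (r.snoc p.last.2 hr').length = r.length + 1 := by simp
          omega⟩

lemma extract {α β : Type*} [PartialOrder α] [PartialOrder β] (p : LTSeries (α × β)) :
    ∃ (q : LTSeries α) (r : LTSeries β),
      q.head = p.head.1 ∧ q.last = p.last.1 ∧ r.head = p.head.2 ∧ r.last = p.last.2 ∧
      p.length ≤ q.length + r.length :=
  extractAux p.length p rfl

lemma split {A B C : Ideal R} (hAC : A ≤ C) (hCB : C ≤ B) {a b : ℕ}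
    (h1 : Bdd A C a) (h2 : Bdd C B b) : Bdd A B (a + b) := by
  intro p hA hB
  have hstep : ∀ i : Fin p.length,
      ((p i.castSucc ⊓ C, p i.castSucc ⊔ C) : Ideal R × Ideal R) <
        (p i.succ ⊓ C, p i.succ ⊔ C) := by
    intro i
    have hlt := p.step i
    refine lt_of_le_of_ne
      (Prod.mk_le_mk.mpr ⟨inf_le_inf_right _ hlt.le, sup_le_sup_right hlt.le _⟩) ?_
    intro hEq
    injection hEq with hEq1 hEq2
    exact hlt.ne (modular_eq hlt.le hEq1 hEq2)
  let p' : LTSeries (Ideal R × Ideal R) :=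
    ⟨p.length, fun i => (p i ⊓ C, p i ⊔ C), hstep⟩
  obtain ⟨q, r, hqh, hql, hrh, hrl, hlen⟩ := extract p'
  have hp'h : p'.head = (p.head ⊓ C, p.head ⊔ C) := rfl
  have hp'l : p'.last = (p.last ⊓ C, p.last ⊔ C) := rfl
  have hq := h1 q (by rw [hqh, hp'h]; exact le_inf hA hAC) (by rw [hql, hp'l]; exact inf_le_right)
  have hr := h2 r (by rw [hrh, hp'h]; exact le_sup_right) (by rw [hrl, hp'l]; exact sup_le hB hCB)
  have : p.length = p'.length := rfl
  omega

lemma gen_bdd (m : Ideal R) (hm : m.IsMaximal) (s : Finset R) :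
    Bdd (m * Ideal.span (s : Set R)) (Ideal.span (s : Set R)) s.card := by
  classical
  induction s using Finset.induction_on with
  | empty =>
    simp only [Finset.coe_empty, Ideal.span_empty, Finset.card_empty, Ideal.mul_bot]
    exact bdd_self ⊥
  | @insert t s' htns ih =>
    set P' : Ideal R := Ideal.span (s' : Set R) with hP'
    set P : Ideal R := Ideal.span ((insert t s' : Finset R) : Set R) with hP
    have hPs : P = Ideal.span {t} ⊔ P' := by
      rw [hP, Finset.coe_insert, Ideal.span_insert]
    have htP : t ∈ P := Ideal.subset_span (by simp)
    have hP'P : P' ≤ P := by rw [hPs]; exact le_sup_right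
    set C : Ideal R := m * P ⊔ P' with hC
    have hmPC : m * P ≤ C := le_sup_left
    have hP'C : P' ≤ C := le_sup_right
    have hCP : C ≤ P := sup_le Ideal.mul_le_right hP'P
    have ha : Bdd (m * P) C s'.card := by
      intro p h1 h2
      have hK : ∀ j : Fin (p.length + 1), p j = m * P ⊔ P' ⊓ p j := by
        intro j
        have hj1 : m * P ≤ p j := h1.trans (p.monotone (Fin.zero_le _))
        have hj2 : p j ≤ C := (p.monotone (Fin.le_last _)).trans h2
        calc p j = C ⊓ p j := (inf_eq_right.mpr hj2).symm
          _ = m * P ⊔ P' ⊓ p j := by rw [hC]; exact sup_inf_assoc_of_le P' hj1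
      have key : ∀ i : Fin p.length, p i.castSucc ⊓ P' < p i.succ ⊓ P' := by
        intro i
        have hlt : p i.castSucc < p i.succ := p.step i
        refine lt_of_le_of_ne (inf_le_inf_right _ hlt.le) fun hEq => hlt.ne ?_
        rw [hK i.castSucc, hK i.succ, inf_comm (a := P'), inf_comm (a := P'), hEq]
      let q : LTSeries (Ideal R) := ⟨p.length, fun j => p j ⊓ P', key⟩
      have hqh : q.head = p.head ⊓ P' := rfl
      have hql : q.last = p.last ⊓ P' := rfl
      have := ih q
        (by rw [hqh]
            exact le_inf ((Ideal.mul_mono_right hP'P).trans h1) Ideal.mul_le_right)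
        (by rw [hql]; exact inf_le_right)
      exact this
    have hb : Bdd C P 1 := by
      have hdichot : ∀ K : Ideal R, C ≤ K → K ≤ P → K = C ∨ K = P := by
        intro K hCK hKP
        set J : Ideal R := Submodule.comap (LinearMap.lsmul R R t) K with hJ
        have hmJ : m ≤ J := by
          intro r hr
          simp only [hJ, Submodule.mem_comap, LinearMap.lsmul_apply, smul_eq_mul]
          rw [mul_comm]
          exact hCK (hmPC (Ideal.mul_mem_mul hr htP))
        by_cases hJtop : J = ⊤
        · right
          have htK : t ∈ K := by
            have h1J : (1 : R) ∈ J := hJtop ▸ Submodule.mem_top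
            simpa [hJ] using h1J
          refine le_antisymm hKP ?_
          rw [hPs]
          exact sup_le ((Ideal.span_singleton_le_iff_mem _).mpr htK) (hP'C.trans hCK)
        · left
          have hJm : J = m := (hm.eq_of_le hJtop hmJ).symm
          refine le_antisymm ?_ hCK
          intro u hu
          have huP : u ∈ P := hKP hu
          rw [hPs] at huP
          obtain ⟨w, hw, v, hv, rfl⟩ := Submodule.mem_sup.mp huP
          obtain ⟨c, rfl⟩ := Ideal.mem_span_singleton'.mp hw
          have hvK : v ∈ K := hCK (hP'C hv)
          have hctK : c * t ∈ K := by
            have hsub := Submodule.sub_mem K hu hvK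
            simpa using hsub
          have hcJ : c ∈ J := by
            simp only [hJ, Submodule.mem_comap, LinearMap.lsmul_apply, smul_eq_mul]
            rwa [mul_comm]
          rw [hJm] at hcJ
          exact Submodule.add_mem C (hmPC (Ideal.mul_mem_mul hcJ htP)) (hP'C hv)
      intro p h1 h2
      by_contra hc
      push_neg at hc
      have h2le : 2 ≤ p.length := hc
      have hm01 : p ⟨0, by omega⟩ < p ⟨1, by omega⟩ :=
        p.strictMono (Fin.mk_lt_mk.mpr (by omega))
      have hm12 : p ⟨1, by omega⟩ < p ⟨2, by omega⟩ :=
        p.strictMono (Fin.mk_lt_mk.mpr (by omega))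
      have hC1 : C ≤ p ⟨1, by omega⟩ := h1.trans (p.monotone (Fin.zero_le _))
      have hP1 : p ⟨1, by omega⟩ ≤ P := (p.monotone (Fin.le_last _)).trans h2
      rcases hdichot _ hC1 hP1 with hEq | hEq
      · have hC0 : C ≤ p ⟨0, by omega⟩ := h1.trans (p.monotone (Fin.zero_le _))
        rw [hEq] at hm01
        exact absurd (hC0.trans_lt hm01) (lt_irrefl _)
      · have hP2 : p ⟨2, by omega⟩ ≤ P := (p.monotone (Fin.le_last _)).trans h2
        rw [hEq] at hm12
        exact absurd (hm12.trans_le hP2) (lt_irrefl _)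
    have hsplit := split hmPC hCP ha hb
    rwa [Finset.card_insert_of_notMem htns]

lemma multiset_bdd [IsNoetherianRing R] :
    ∀ (W : Multiset (Ideal R)), (∀ m ∈ W, m.IsMaximal) → ∃ M, Bdd W.prod ⊤ M := by
  intro W
  induction W using Multiset.induction_on with
  | empty =>
    intro _
    refine ⟨0, ?_⟩
    simp only [Multiset.prod_zero, Ideal.one_eq_top]
    exact bdd_self ⊤
  | cons m W ih =>
    intro hmax
    obtain ⟨M', hM'⟩ := ih (fun k hk => hmax k (Multiset.mem_cons_of_mem hk))
    have hm : m.IsMaximal := hmax m (Multiset.mem_cons_self _ _)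
    obtain ⟨s, hs⟩ := (IsNoetherian.noetherian W.prod : (W.prod : Ideal R).FG)
    have hgen := gen_bdd m hm s
    rw [show Ideal.span (s : Set R) = W.prod from hs] at hgen
    have hsplit := split Ideal.mul_le_right le_top hgen hM'
    exact ⟨s.card + M', by rwa [Multiset.prod_cons]⟩

lemma maximal_of_prime_ne_bot [IsDomain R] (hdim : ringKrullDim R ≤ 1)
    {p : Ideal R} (hp : p.IsPrime) (h0 : p ≠ ⊥) : p.IsMaximal := by
  by_contra hnm
  obtain ⟨m, hm, hpm⟩ := p.exists_le_maximal hp.ne_top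
  have hlt : p < m := lt_of_le_of_ne hpm (by rintro rfl; exact hnm hm)
  have hbotp : (⊥ : Ideal R) < p := bot_lt_iff_ne_bot.mpr h0
  let f : Fin 3 → PrimeSpectrum R := ![⟨⊥, Ideal.bot_prime⟩, ⟨p, hp⟩, ⟨m, hm.isPrime⟩]
  have hstep : ∀ i : Fin 2, f i.castSucc < f i.succ := by
    intro i
    fin_cases i
    · exact (PrimeSpectrum.asIdeal_lt_asIdeal _ _).mp hbotp
    · exact (PrimeSpectrum.asIdeal_lt_asIdeal _ _).mp hlt
  let s : LTSeries (PrimeSpectrum R) := ⟨2, f, hstep⟩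
  have hlen : ((2 : ℕ) : WithBot ℕ∞) ≤ ringKrullDim R := Order.LTSeries.length_le_krullDim s
  have hcontr := hlen.trans hdim
  norm_num at hcontr

lemma core [IsDomain R] [IsNoetherianRing R] (hfield : ¬ IsField R) (hdim : ringKrullDim R ≤ 1)
    {a : R} (ha : a ≠ 0) : ∃ M, Bdd (Ideal.span {a} : Ideal R) ⊤ M := by
  obtain ⟨Z, hle, hne⟩ := PrimeSpectrum.exists_primeSpectrum_prod_le_and_ne_bot_of_domain hfield
      (I := Ideal.span {a}) (by rwa [Ne, Ideal.span_singleton_eq_bot])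
  have hmax : ∀ m ∈ Z.map PrimeSpectrum.asIdeal, m.IsMaximal := by
    intro m hmZ
    obtain ⟨q, hq, rfl⟩ := Multiset.mem_map.mp hmZ
    refine maximal_of_prime_ne_bot hdim q.isPrime ?_
    intro hbot
    apply hne
    obtain ⟨Z', hZ'⟩ := Multiset.exists_cons_of_mem hmZ
    have hprodle : (Z.map PrimeSpectrum.asIdeal).prod ≤ q.asIdeal := by
      rw [hZ', Multiset.prod_cons]
      exact Ideal.mul_le_left
    rw [hbot] at hprodle
    exact le_bot_iff.mp hprodle
  obtain ⟨M, hM⟩ := multiset_bdd (Z.map PrimeSpectrum.asIdeal) hmax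
  exact ⟨M, bdd_mono hM hle le_rfl⟩

lemma key [IsDomain R] [IsNoetherianRing R] (hfield : ¬ IsField R) (hdim : ringKrullDim R ≤ 1)
    {x : R} (_hx : x ≠ 0) {N : ℕ} (hN : Bdd (Ideal.span {x} : Ideal R) ⊤ N)
    {I : Ideal R} (hI : I ≠ ⊥) : Bdd (Ideal.span {x} * I) I N := by
  classical
  obtain ⟨a, haI, ha⟩ := Submodule.exists_mem_ne_zero_of_ne_bot hI
  obtain ⟨M, hM⟩ := core hfield hdim ha
  have hIM : Bdd I ⊤ M := bdd_mono hM ((Ideal.span_singleton_le_iff_mem _).mpr haI) le_rfl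
  set S : Set ℕ := {l | ∃ p : LTSeries (Ideal R), I ≤ p.head ∧ p.length = l} with hS
  have hSne : S.Nonempty := ⟨0, RelSeries.singleton _ I, le_rfl, rfl⟩
  have hSbdd : BddAbove S := ⟨M, fun l ⟨p, hp, hpl⟩ => hpl ▸ hIM p hp le_top⟩
  set L := sSup S with hL
  obtain ⟨q0, hq0h, hq0l⟩ : L ∈ S := Nat.sSup_mem hSne hSbdd
  have hub : ∀ l ∈ S, l ≤ L := fun l hl => le_csSup hSbdd hl
  have hq0head : q0.head = I := by
    rcases eq_or_lt_of_le hq0h with h | h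
    · exact h.symm
    · exfalso
      have hmem : L + 1 ∈ S := ⟨q0.cons I h, by rw [RelSeries.head_cons], by
        rw [RelSeries.cons_length, hq0l]⟩
      have := hub _ hmem
      omega
  intro p hp1 hp2
  obtain ⟨p1, hp1h, hp1l, hp1len⟩ := extend p I hp2
  have hcon : p1.last = q0.head := by rw [hp1l, hq0head]
  set r := p1.smash q0 hcon with hr
  have hrlen : r.length = p1.length + L := by
    rw [hr, RelSeries.smash_length, hq0l]
  have hrhead : r.head = p1.head := RelSeries.head_smash hcon
  set xR : Ideal R := Ideal.span {x} with hxR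
  have hmap : ∀ {K K' : Ideal R}, K < K' →
      ((Submodule.comap (LinearMap.lsmul R R x) (K ⊓ xR), K ⊔ xR) : Ideal R × Ideal R) <
      (Submodule.comap (LinearMap.lsmul R R x) (K' ⊓ xR), K' ⊔ xR) := by
    intro K K' hlt
    refine lt_of_le_of_ne (Prod.mk_le_mk.mpr
      ⟨Submodule.comap_mono (inf_le_inf_right _ hlt.le), sup_le_sup_right hlt.le _⟩) ?_
    intro hEq
    injection hEq with h1 h2
    have hinf : K ⊓ xR = K' ⊓ xR := by
      refine le_antisymm (inf_le_inf_right _ hlt.le) ?_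
      intro u hu
      have huxR : u ∈ xR := hu.2
      obtain ⟨c, hc⟩ := Ideal.mem_span_singleton'.mp (by rw [hxR] at huxR; exact huxR)
      have hcmem : c ∈ Submodule.comap (LinearMap.lsmul R R x) (K' ⊓ xR) := by
        simp only [Submodule.mem_comap, LinearMap.lsmul_apply, smul_eq_mul]
        rw [mul_comm, hc]
        exact hu
      rw [← h1] at hcmem
      simp only [Submodule.mem_comap, LinearMap.lsmul_apply, smul_eq_mul] at hcmem
      rwa [mul_comm, hc] at hcmem
    exact hlt.ne (modular_eq hlt.le hinf h2)
  let r' : LTSeries (Ideal R × Ideal R) :=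
    ⟨r.length, fun i => (Submodule.comap (LinearMap.lsmul R R x) (r i ⊓ xR), r i ⊔ xR),
     fun i => hmap (r.step i)⟩
  obtain ⟨q1, r1, hq1h, _, hr1h, _, hlen⟩ := extract r'
  have hr'h : r'.head = (Submodule.comap (LinearMap.lsmul R R x) (r.head ⊓ xR), r.head ⊔ xR) := rfl
  have hq1S : q1.length ∈ S := by
    refine ⟨q1, ?_, rfl⟩
    rw [hq1h, hr'h]
    intro u hu
    simp only [Submodule.mem_comap, LinearMap.lsmul_apply, smul_eq_mul]
    refine Submodule.mem_inf.mpr ⟨?_, ?_⟩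
    · have hxu : x * u ∈ Ideal.span {x} * I :=
        Ideal.mul_mem_mul (Ideal.mem_span_singleton_self x) hu
      have hle2 : Ideal.span {x} * I ≤ r.head := by
        rw [hrhead, hp1h]; exact hp1
      exact hle2 hxu
    · exact Ideal.mul_mem_right u _ (Ideal.mem_span_singleton_self x)
  have hq1L : q1.length ≤ L := hub _ hq1S
  have hr1N : r1.length ≤ N := hN r1 (by rw [hr1h, hr'h]; exact le_sup_right) le_top
  have hrlen2 : r.length ≤ q1.length + r1.length := hlen
  omega

end FiniteBreadthAux

open FiniteBreadthAux in
/-- A Noetherian domain with finitely many maximal ideals and Krull dimension at most 1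
has finite breadth. -/
theorem finite_breadth_of_semilocal_dim_le_one_domain {R : Type*} [CommRing R] [IsDomain R]
    [IsNoetherianRing R]
    (hsemilocal : {I : Ideal R | I.IsMaximal}.Finite)
    (hdim : ringKrullDim R ≤ 1) :
    ∃ n : ℕ, ∀ y : Fin (n + 1) → R, ∃ i,
      Ideal.span (y '' {j | j ≠ i}) = Ideal.span (Set.range y) := by
  classical
  by_cases hfield : IsField R
  · refine ⟨1, fun y => ?_⟩
    by_cases h0 : y 0 = 0
    · refine ⟨0, le_antisymm (Ideal.span_mono (Set.image_subset_range y _)) ?_⟩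
      rw [Ideal.span_le]
      rintro u ⟨j, rfl⟩
      by_cases hj : j = 0
      · subst hj; rw [h0]; exact (Ideal.span _).zero_mem
      · exact Ideal.subset_span ⟨j, hj, rfl⟩
    · refine ⟨1, ?_⟩
      obtain ⟨b, hb⟩ := hfield.mul_inv_cancel h0
      have hu : IsUnit (y 0) := IsUnit.of_mul_eq_one _ hb
      have h1 : Ideal.span (y '' {j | j ≠ 1}) = ⊤ :=
        Ideal.eq_top_of_isUnit_mem _ (Ideal.subset_span ⟨0, by decide, rfl⟩) hu
      have h2 : Ideal.span (Set.range y) = ⊤ :=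
        Ideal.eq_top_of_isUnit_mem _ (Ideal.subset_span ⟨0, rfl⟩) hu
      rw [h1, h2]
  · -- non-field case
    have hmaxne : ∀ m : Ideal R, m.IsMaximal → m ≠ ⊥ := by
      intro m hm hbot
      apply hfield
      subst hbot
      refine ⟨exists_pair_ne R, mul_comm, ?_⟩
      intro a ha
      have h1 : (⊥ : Ideal R) < Ideal.span {a} :=
        bot_lt_iff_ne_bot.mpr (by rwa [Ne, Ideal.span_singleton_eq_bot])
      have h2 : Ideal.span {a} = ⊤ := hm.out.2 _ h1
      obtain ⟨b, hb⟩ := Ideal.mem_span_singleton'.mp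
        (h2 ▸ Submodule.mem_top : (1 : R) ∈ Ideal.span {a})
      exact ⟨b, by rw [mul_comm]; exact hb⟩
    set T := hsemilocal.toFinset with hT
    have hchoice : ∀ m : Ideal R, m.IsMaximal → ∃ c, c ∈ m ∧ c ≠ 0 := fun m hm =>
      Submodule.exists_mem_ne_zero_of_ne_bot (hmaxne m hm)
    let g : Ideal R → R := fun m => if h : m.IsMaximal then (hchoice m h).choose else 1
    have hg : ∀ m : Ideal R, m.IsMaximal → g m ∈ m ∧ g m ≠ 0 := by
      intro m hm
      simp only [g, dif_pos hm]
      exact (hchoice m hm).choose_spec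
    set x : R := ∏ m ∈ T, g m with hxdef
    have hx0 : x ≠ 0 := Finset.prod_ne_zero_iff.mpr
      (fun m hm => (hg m (by rwa [hT, Set.Finite.mem_toFinset] at hm)).2)
    have hxmem : ∀ m : Ideal R, m.IsMaximal → x ∈ m := by
      intro m hm
      have hmT : m ∈ T := by rw [hT, Set.Finite.mem_toFinset]; exact hm
      rw [hxdef, ← Finset.mul_prod_erase T g hmT]
      exact Ideal.mul_mem_right _ _ (hg m hm).1
    have hxjac : Ideal.span {x} ≤ Ideal.jacobson ⊥ := by
      rw [Ideal.span_singleton_le_iff_mem, Ideal.jacobson]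
      rw [Ideal.mem_sInf]
      rintro J ⟨-, hJ⟩
      exact hxmem J hJ
    obtain ⟨N, hNb⟩ := core hfield hdim hx0
    refine ⟨N, fun y => ?_⟩
    set I := Ideal.span (Set.range y) with hIdef
    by_cases hbot : I = ⊥
    · refine ⟨0, le_antisymm ?_ ?_⟩
      · rw [hIdef]; exact Ideal.span_mono (Set.image_subset_range y _)
      · rw [hbot]; exact bot_le
    · have hkey : Bdd (Ideal.span {x} * I) I N := key hfield hdim hx0 hNb hbot
      have hdrop : ∃ i : Fin (N + 1),
          y i ∈ Ideal.span (y '' {j | j ≠ i}) ⊔ Ideal.span {x} * I := by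
        by_contra hcon
        push_neg at hcon
        have hstep : ∀ i : Fin (N + 1),
            Ideal.span (y '' {j | (j : ℕ) < (i : ℕ)}) ⊔ Ideal.span {x} * I <
            Ideal.span (y '' {j | (j : ℕ) < (i : ℕ) + 1}) ⊔ Ideal.span {x} * I := by
          intro i
          have hle : Ideal.span (y '' {j | (j : ℕ) < (i : ℕ)}) ⊔ Ideal.span {x} * I ≤
              Ideal.span (y '' {j | (j : ℕ) < (i : ℕ) + 1}) ⊔ Ideal.span {x} * I :=
            sup_le_sup_right (Ideal.span_mono (Set.image_mono (f := y) (fun j hj => by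
              simp only [Set.mem_setOf_eq] at hj ⊢; omega))) _
          have hyi : y i ∈ Ideal.span (y '' {j | (j : ℕ) < (i : ℕ) + 1}) ⊔ Ideal.span {x} * I :=
            Submodule.mem_sup_left (Ideal.subset_span ⟨i, by simp, rfl⟩)
          refine lt_of_le_of_ne hle fun hEq => ?_
          apply hcon i
          have hyiL : y i ∈ Ideal.span (y '' {j | (j : ℕ) < (i : ℕ)}) ⊔ Ideal.span {x} * I := by
            rw [hEq]; exact hyi
          refine (sup_le_sup_right (Ideal.span_mono (Set.image_mono (f := y) (fun j hj => ?_))) _) hyiL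
          simp only [Set.mem_setOf_eq] at hj ⊢
          intro hji
          rw [hji] at hj
          omega
        let s : LTSeries (Ideal R) :=
          ⟨N + 1, fun k => Ideal.span (y '' {j | (j : ℕ) < (k : ℕ)}) ⊔ Ideal.span {x} * I,
            fun i => by
              have := hstep i
              simpa only [Fin.coe_castSucc, Fin.val_succ, Set.mem_setOf_eq] using this⟩
        have hshead : Ideal.span {x} * I ≤ s.head := le_sup_right
        have hslast : s.last ≤ I := by
          show Ideal.span (y '' _) ⊔ Ideal.span {x} * I ≤ I
          refine sup_le ?_ Ideal.mul_le_right
          refine (Ideal.span_mono (Set.image_subset_range y _)).trans ?_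
          rw [hIdef]
        have := hkey s hshead hslast
        simp only [s] at this
        omega
      obtain ⟨i, hi⟩ := hdrop
      refine ⟨i, ?_⟩
      have hSle : Ideal.span (y '' {j | j ≠ i}) ≤ I := by
        rw [hIdef]; exact Ideal.span_mono (Set.image_subset_range y _)
      have hNak : I ≤ Ideal.span (y '' {j | j ≠ i}) := by
        apply Submodule.le_of_le_smul_of_le_jacobson_bot (IsNoetherian.noetherian I) hxjac
        rw [Ideal.smul_eq_mul]
        rw [hIdef, Ideal.span_le]
        rintro u ⟨j, rfl⟩
        by_cases hj : j = i
        · subst hj; exact hi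
        · exact Submodule.mem_sup_left (Ideal.subset_span ⟨j, hj, rfl⟩)
      exact le_antisymm hSle hNak
end

section
/- Let R be a Noetherian commutative ring with breadth at most n. Then every ideal of R is generated by at most n elements: for every ideal I of R there is a finite set S ⊆ R with |S| ≤ n generating I. -/
/-!
If more than `n` elements generate an ideal, breadth at most `n` lets us drop one of them without
changing the ideal; repeating this on a finite generating set, which exists by Noetherianity,
leaves at most `n` generators.
-/

def BreadthLE (R : Type*) [CommSemiring R] (n : ℕ) : Prop :=
  ∀ y : Fin (n + 1) → R, ∃ i, Ideal.span (y '' {j | j ≠ i}) = Ideal.span (Set.range y)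

namespace BreadthLE

variable {R : Type*} [CommSemiring R] [DecidableEq R] {n : ℕ}

theorem exists_mem_span_erase (h : BreadthLE R n) {S : Finset R} (hS : n < S.card) :
    ∃ s ∈ S, s ∈ Ideal.span (S.erase s : Set R) := by
  let y : Fin (n + 1) → R := fun j => S.equivFin.symm (Fin.castLE hS j)
  have hy_inj : Function.Injective y := fun a b hab =>
    Fin.castLE_injective hS (S.equivFin.symm.injective (Subtype.ext hab))
  have hy_mem : ∀ j, y j ∈ S := fun j => (S.equivFin.symm _).2
  obtain ⟨i, hi⟩ := h y
  have h_sub : y '' {j | j ≠ i} ⊆ (S.erase (y i) : Set R) := by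
    rintro _ ⟨j, hj, rfl⟩
    exact Finset.mem_erase.mpr ⟨hy_inj.ne hj, hy_mem j⟩
  refine ⟨y i, hy_mem i, Ideal.span_mono h_sub ?_⟩
  rw [hi]
  exact Ideal.subset_span ⟨i, rfl⟩

theorem exists_subset_card_le_span_eq (h : BreadthLE R n) (S : Finset R) :
    ∃ T ⊆ S, T.card ≤ n ∧ Ideal.span (T : Set R) = Ideal.span (S : Set R) := by
  induction S using Finset.strongInduction with
  | H S ih =>
    by_cases hS : S.card ≤ n
    · exact ⟨S, subset_rfl, hS, rfl⟩
    obtain ⟨s, hs, hs_span⟩ := h.exists_mem_span_erase (not_le.mp hS)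
    obtain ⟨T, hT_sub, hT_card, hT_span⟩ := ih (S.erase s) (Finset.erase_ssubset hs)
    refine ⟨T, hT_sub.trans (Finset.erase_subset s S), hT_card, hT_span.trans ?_⟩
    conv_rhs => rw [← Finset.insert_erase hs, Finset.coe_insert]
    exact (Submodule.span_insert_eq_span hs_span).symm

end BreadthLE

/-- In a Noetherian commutative ring of breadth at most `n`, every ideal is generated by
at most `n` elements. -/
theorem ideal_generated_by_le_of_breadth_le {R : Type*} [CommRing R] [IsNoetherianRing R]
    (n : ℕ)
    (hbr : ∀ y : Fin (n + 1) → R, ∃ i,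
      Ideal.span (y '' {j | j ≠ i}) = Ideal.span (Set.range y))
    (I : Ideal R) :
    ∃ S : Finset R, S.card ≤ n ∧ Ideal.span (S : Set R) = I := by
  classical
  obtain ⟨S, hS⟩ := IsNoetherian.noetherian I
  obtain ⟨T, -, hT_card, hT_span⟩ := BreadthLE.exists_subset_card_le_span_eq hbr S
  exact ⟨T, hT_card, hT_span.trans hS⟩
end

section
/- Let R be a local integral domain with maximal ideal m and fraction field K, and let S be a subring of K containing R such that S is a local ring with maximal ideal m_S satisfying m = R ∩ m_S. Suppose that K, as an R-module, has breadth at most n. Then the quotient m·S ⊆ m_S, so S/m_S is naturally a vector space over the residue field R/m, and its dimension over R/m is at most n; in particular S/m_S is a finite extension of R/m. -/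
set_option synthInstance.maxHeartbeats 1000000
set_option maxHeartbeats 1000000

/-- Let `R` be a local domain with maximal ideal `m` and fraction field `K`, and let `S` be a
subring of `K` containing `R` (a subalgebra of `K`) which is local with maximal ideal `m_S`
satisfying `m = R ∩ m_S`.  If `K` has breadth at most `n` as an `R`-module, then `m` maps
into `m_S`, so `S/m_S` is a vector space over `R/m`, and its dimension over `R/m` is at most
`n`; in particular it is a finite extension of `R/m`. -/
theorem residue_field_finite_of_breadth_le {R : Type*} [CommRing R] [IsDomain R]
    [IsLocalRing R] {K : Type*} [Field K] [Algebra R K] [IsFractionRing R K]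
    (S : Subalgebra R K) [IsLocalRing ↥S]
    (hloc : (IsLocalRing.maximalIdeal ↥S).comap (algebraMap R ↥S) =
      IsLocalRing.maximalIdeal R)
    (n : ℕ)
    (hbr : ∀ y : Fin (n + 1) → K, ∃ i,
      Submodule.span R (y '' {j | j ≠ i}) = Submodule.span R (Set.range y)) :
    (∀ a ∈ IsLocalRing.maximalIdeal R, algebraMap R ↥S a ∈ IsLocalRing.maximalIdeal ↥S) ∧
    letI : Algebra (R ⧸ IsLocalRing.maximalIdeal R) (↥S ⧸ IsLocalRing.maximalIdeal ↥S) :=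
      (Ideal.quotientMap (IsLocalRing.maximalIdeal ↥S) (algebraMap R ↥S) hloc.ge).toAlgebra
    Module.Finite (R ⧸ IsLocalRing.maximalIdeal R) (↥S ⧸ IsLocalRing.maximalIdeal ↥S) ∧
      Module.finrank (R ⧸ IsLocalRing.maximalIdeal R) (↥S ⧸ IsLocalRing.maximalIdeal ↥S) ≤ n := by
  refine ⟨fun a ha => by rw [← hloc] at ha; exact ha, ?_⟩
  letI alg : Algebra (R ⧸ IsLocalRing.maximalIdeal R) (↥S ⧸ IsLocalRing.maximalIdeal ↥S) :=
    (Ideal.quotientMap (IsLocalRing.maximalIdeal ↥S) (algebraMap R ↥S) hloc.ge).toAlgebra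
  let m := IsLocalRing.maximalIdeal R
  let mS := IsLocalRing.maximalIdeal ↥S
  letI : Field (R ⧸ IsLocalRing.maximalIdeal R) :=
    Ideal.Quotient.field (IsLocalRing.maximalIdeal R)
  let k := R ⧸ IsLocalRing.maximalIdeal R
  let Q := ↥S ⧸ IsLocalRing.maximalIdeal ↥S
  -- scalar compatibility
  have hsmul : ∀ (a : R) (x : ↥S),
      (Ideal.Quotient.mk m a) • (Ideal.Quotient.mk mS x) = Ideal.Quotient.mk mS (a • x) := by
    intro a x
    show (Ideal.quotientMap mS (algebraMap R ↥S) hloc.ge) (Ideal.Quotient.mk m a) *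
      Ideal.Quotient.mk mS x = _
    rw [Ideal.quotientMap_mk, ← map_mul, Algebra.smul_def]
  -- no n+1 independent family
  have hdep : ∀ v : Fin (n + 1) → Q, ¬ LinearIndependent k v := by
    intro v hv
    choose x hx using fun i => Ideal.Quotient.mk_surjective (I := mS) (v i)
    set y : Fin (n + 1) → K := fun i => (x i : K) with hy
    obtain ⟨i, hi⟩ := hbr y
    have hmem : y i ∈ Submodule.span R (y '' {j | j ≠ i}) := by
      rw [hi]; exact Submodule.subset_span ⟨i, rfl⟩
    rw [Finsupp.mem_span_image_iff_linearCombination] at hmem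
    obtain ⟨l, hls, hl⟩ := hmem
    -- lift the relation to S
    have hS : Finsupp.linearCombination R x l = x i := by
      apply Subtype.coe_injective
      exact (Finsupp.apply_linearCombination R S.val.toLinearMap x l).trans hl
    -- project to Q
    have hQ : v i ∈ Submodule.span k (v '' {j | j ≠ i}) := by
      rw [← hx i, ← hS]
      simp only [Finsupp.linearCombination_apply, Finsupp.sum, map_sum]
      refine Submodule.sum_mem _ fun j hj => ?_
      rw [← hsmul (l j) (x j), hx j]
      exact Submodule.smul_mem _ _ (Submodule.subset_span ⟨j, hls hj, rfl⟩)
    exact hv.notMem_span_image (by simp : i ∉ {j | j ≠ i}) hQ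
  have hrank : Module.rank k Q ≤ n := by
    apply rank_le
    intro s hs
    by_contra hcard
    push_neg at hcard
    obtain ⟨t, hts, ht⟩ := s.exists_subset_card_eq hcard
    have e : Fin (n + 1) ≃ t := (t.equivFinOfCardEq ht).symm
    have hind : LinearIndependent k (fun i : Fin (n + 1) => ((e i : Q))) := by
      have : LinearIndependent k (fun i : t => (i : Q)) := by
        have := hs.comp (fun i : t => (⟨i.1, hts i.2⟩ : s)) (by
          intro a b hab
          exact Subtype.ext (congrArg Subtype.val hab :))
        exact this
      exact this.comp e e.injective
    exact hdep _ hind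
  have hfin : Module.Finite k Q := Module.rank_lt_aleph0_iff.mp
    (lt_of_le_of_lt hrank (Cardinal.nat_lt_aleph0 n))
  exact ⟨hfin, Module.finrank_le_of_rank_le hrank⟩
end

section
/- Let R be a commutative ring with breadth at most n, and let S be a commutative R-algebra that is free of finite rank d as an R-module (i.e., S ≅ R^d as R-modules). Then S has breadth at most d·n. -/
open Submodule Set

private lemma breadth_finset_reduce {R : Type*} [CommRing R] (n : ℕ)
    (hbr : ∀ y : Fin (n + 1) → R, ∃ i,
      Ideal.span (y '' {j | j ≠ i}) = Ideal.span (Set.range y)) :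
    ∀ s : Finset R, ∃ u : Finset R, (↑u : Set R) ⊆ ↑s ∧ u.card ≤ n ∧
      Ideal.span (↑u : Set R) = Ideal.span (↑s : Set R) := by
  classical
  intro s
  induction s using Finset.strongInduction with
  | _ s ih =>
    by_cases h : s.card ≤ n
    · exact ⟨s, subset_rfl, h, rfl⟩
    · have hlt : n + 1 ≤ s.card := by omega
      obtain ⟨t, hts, htc⟩ := Finset.exists_subset_card_eq hlt
      let e : ↥t ≃ Fin (n + 1) := t.equivFin.trans (finCongr htc)
      set y : Fin (n + 1) → R := fun i => ↑(e.symm i) with hy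
      obtain ⟨i, hi⟩ := hbr y
      set a : R := y i with ha
      have has : a ∈ s := hts (e.symm i).2
      have hyinj : Function.Injective y := by
        intro j k hjk
        have : e.symm j = e.symm k := Subtype.ext hjk
        simpa using congrArg e this
      have hmem : a ∈ Ideal.span ((↑(s.erase a) : Set R)) := by
        have h1 : a ∈ Ideal.span (y '' {j | j ≠ i}) := by
          rw [hi]; exact Ideal.subset_span (mem_range_self i)
        refine Ideal.span_mono ?_ h1
        rintro r ⟨j, hj, rfl⟩
        refine Finset.mem_coe.mpr (Finset.mem_erase.mpr ⟨?_, hts (e.symm j).2⟩)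
        intro hcon
        exact hj (hyinj hcon)
      have hspan : Ideal.span (↑(s.erase a) : Set R) = Ideal.span (↑s : Set R) := by
        have hseq : (↑s : Set R) = insert a ↑(s.erase a) := by
          conv_lhs => rw [← Finset.insert_erase has]
          rw [Finset.coe_insert]
        rw [hseq]
        exact (Submodule.span_insert_eq_span hmem).symm
      obtain ⟨u, hu1, hu2, hu3⟩ := ih (s.erase a) (Finset.erase_ssubset has)
      exact ⟨u, hu1.trans (by simp [Finset.erase_subset]), hu2, hu3.trans hspan⟩

private def snocZeroMap (R : Type*) [CommRing R] (d : ℕ) :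
    (Fin d → R) →ₗ[R] (Fin (d + 1) → R) where
  toFun g := Fin.snoc g 0
  map_add' g h := by
    funext i
    refine Fin.lastCases ?_ (fun j => ?_) i <;>
      simp [Fin.snoc_last, Fin.snoc_castSucc]
  map_smul' r g := by
    funext i
    refine Fin.lastCases ?_ (fun j => ?_) i <;>
      simp [Fin.snoc_last, Fin.snoc_castSucc]

private lemma breadth_module_lemma {R : Type*} [CommRing R] (n : ℕ)
    (hbr : ∀ y : Fin (n + 1) → R, ∃ i,
      Ideal.span (y '' {j | j ≠ i}) = Ideal.span (Set.range y)) :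
    ∀ d : ℕ, ∀ (ι : Type) [Fintype ι], ∀ y : ι → (Fin d → R),
      d * n + 1 ≤ Fintype.card ι →
      ∃ i, y i ∈ Submodule.span R (y '' {j | j ≠ i}) := by
  classical
  intro d
  induction d with
  | zero =>
    intro ι _ y hc
    have : Nonempty ι := Fintype.card_pos_iff.mp (by omega)
    obtain ⟨i⟩ := this
    refine ⟨i, ?_⟩
    have : y i = 0 := Subsingleton.elim _ _
    rw [this]; exact Submodule.zero_mem _
  | succ d ih =>
    intro ι _ y hc
    set x : ι → R := fun j => y j (Fin.last d) with hx
    obtain ⟨u, hus, huc, huspan⟩ :=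
      breadth_finset_reduce n hbr (Finset.image x Finset.univ)
    -- choose index preimages for elements of u
    have hch : ∀ r : ↥u, ∃ j : ι, x j = ↑r := by
      intro r
      have := hus r.2
      simpa [eq_comm] using this
    choose f hf using hch
    set P : Finset ι := Finset.image f Finset.univ with hP
    have hPcard : P.card ≤ n := le_trans (Finset.card_image_le.trans (by simp)) huc
    have hxP : ∀ j, x j ∈ Submodule.span R (x '' (↑P : Set ι)) := by
      intro j
      have h1 : x j ∈ Ideal.span (↑(Finset.image x Finset.univ) : Set R) :=
        Ideal.subset_span (by simp)
      rw [← huspan] at h1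
      refine Ideal.span_le.mpr ?_ h1
      rintro r hr
      refine Ideal.subset_span ⟨f ⟨r, hr⟩, ?_, hf ⟨r, hr⟩⟩
      simp [hP]
    -- coefficients
    have hxP' : ∀ j, ∃ c : ↥P → R, ∑ k : ↥P, c k • x ↑k = x j := by
      intro j
      have := hxP j
      rw [Set.image_eq_range x (↑P : Set ι)] at this
      exact (mem_span_range_iff_exists_fun R).mp this
    choose cf hcf using hxP'
    set z : ι → (Fin (d + 1) → R) := fun j => y j - ∑ k : ↥P, cf j k • y ↑k with hz
    have hzlast : ∀ j, z j (Fin.last d) = 0 := by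
      intro j
      have := hcf j
      simp only [hz, Pi.sub_apply, Finset.sum_apply, Pi.smul_apply, smul_eq_mul]
      simp only [smul_eq_mul] at this
      rw [this]; ring
    -- pass to the subtype of indices not in P
    have hcard' : d * n + 1 ≤ Fintype.card {j : ι // j ∉ P} := by
      have h1 : Fintype.card {j : ι // j ∉ P} =
          Fintype.card ι - Fintype.card {j : ι // j ∈ P} :=
        Fintype.card_subtype_compl _
      rw [h1, Fintype.card_coe]
      have hmul : (d + 1) * n = d * n + n := by ring
      omega
    set w : {j : ι // j ∉ P} → (Fin d → R) := fun j => Fin.init (z ↑j) with hw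
    obtain ⟨i₀, hi₀⟩ := ih {j : ι // j ∉ P} w hcard'
    have hzw : ∀ j : {j : ι // j ∉ P}, z ↑j = snocZeroMap R d (w j) := by
      intro j
      have h1 := Fin.snoc_init_self (z ↑j)
      rw [hzlast ↑j] at h1
      exact h1.symm
    refine ⟨↑i₀, ?_⟩
    set N := Submodule.span R (y '' {j : ι | j ≠ ↑i₀}) with hN
    have hyP : ∀ k : ↥P, y ↑k ∈ N := by
      intro k
      refine Submodule.subset_span ⟨↑k, ?_, rfl⟩
      intro hcon
      exact i₀.2 (hcon ▸ k.2)
    have hzmem : ∀ j : {j : ι // j ∉ P}, j ≠ i₀ → z ↑j ∈ N := by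
      intro j hj
      refine Submodule.sub_mem _ (Submodule.subset_span ⟨↑j, ?_, rfl⟩)
        (Submodule.sum_mem _ fun k _ => Submodule.smul_mem _ _ (hyP k))
      exact fun hcon => hj (Subtype.ext hcon)
    have hzi₀ : z ↑i₀ ∈ N := by
      rw [hzw i₀]
      have h1 : snocZeroMap R d (w i₀) ∈
          Submodule.span R (⇑(snocZeroMap R d) '' (w '' {j | j ≠ i₀})) := by
        rw [Submodule.span_image]
        exact Submodule.mem_map_of_mem hi₀
      refine Submodule.span_le.mpr ?_ h1
      rintro v ⟨_, ⟨j, hj, rfl⟩, rfl⟩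
      rw [← hzw j]
      exact hzmem j hj
    have : y ↑i₀ = z ↑i₀ + ∑ k : ↥P, cf ↑i₀ k • y ↑k := by
      simp [hz]
    rw [this]
    exact Submodule.add_mem _ hzi₀
      (Submodule.sum_mem _ fun k _ => Submodule.smul_mem _ _ (hyP k))

/-- If a commutative ring `R` has breadth at most `n` and `S` is a commutative `R`-algebra
that is free of finite rank `d` as an `R`-module, then `S` has breadth at most `d * n`. -/
theorem breadth_le_of_free_algebra {R S : Type*} [CommRing R] [CommRing S] [Algebra R S]
    (n d : ℕ)
    (hbr : ∀ y : Fin (n + 1) → R, ∃ i,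
      Ideal.span (y '' {j | j ≠ i}) = Ideal.span (Set.range y))
    (b : Module.Basis (Fin d) R S) :
    ∀ y : Fin (d * n + 1) → S, ∃ i,
      Ideal.span (y '' {j | j ≠ i}) = Ideal.span (Set.range y) := by
  intro y
  set e : S ≃ₗ[R] (Fin d → R) := b.equivFun with he
  obtain ⟨i, hi⟩ := breadth_module_lemma n hbr d (Fin (d * n + 1)) (fun j => e (y j))
    (by simp)
  have h1 : (fun j => e (y j)) '' {j | j ≠ i} = ⇑e '' (y '' {j | j ≠ i}) := by
    rw [Set.image_image]
  rw [h1] at hi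
  have h2 : y i ∈ Submodule.span R (y '' {j | j ≠ i}) :=
    (Submodule.apply_mem_span_image_iff_mem_span e.injective).mp hi
  have h3 : y i ∈ Ideal.span (y '' {j | j ≠ i}) := by
    have hle : Submodule.span R (y '' {j | j ≠ i}) ≤
        (Ideal.span (y '' {j | j ≠ i})).restrictScalars R :=
      Submodule.span_le.mpr Ideal.subset_span
    exact hle h2
  refine ?_
  have hrange : Set.range y = insert (y i) (y '' {j | j ≠ i}) := by
    rw [← Set.image_univ]
    have : (Set.univ : Set (Fin (d * n + 1))) = insert i {j | j ≠ i} := by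
      ext j; by_cases hj : j = i <;> simp [hj]
    rw [this, Set.image_insert_eq]
  rw [hrange]
  exact ⟨i, (Submodule.span_insert_eq_span h3).symm⟩
end

section
/- Let R be a Noetherian commutative ring, regarded as a structure in the first-order language of rings, and let R₀ be an elementary substructure of R. Then R₀, with its induced ring structure as a subring of R, is a Noetherian ring. -/
open FirstOrder FirstOrder.Ring

/-- A substructure of a commutative ring, viewed as a structure in the first-order
language of rings, is a subring. -/
def FirstOrder.Language.Substructure.toSubring {R : Type*} [CommRing R] [CompatibleRing R]
    (S : Language.ring.Substructure R) : Subring R where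
  carrier := S
  zero_mem' := by
    simpa [CompatibleRing.funMap_zero] using
      S.fun_mem zeroFunc ![] (fun i => i.elim0)
  one_mem' := by
    simpa [CompatibleRing.funMap_one] using
      S.fun_mem oneFunc ![] (fun i => i.elim0)
  add_mem' {a b} ha hb := by
    simpa [CompatibleRing.funMap_add] using
      S.fun_mem addFunc ![a, b] (fun i => by fin_cases i <;> assumption)
  mul_mem' {a b} ha hb := by
    simpa [CompatibleRing.funMap_mul] using
      S.fun_mem mulFunc ![a, b] (fun i => by fin_cases i <;> assumption)
  neg_mem' {a} ha := by
    simpa [CompatibleRing.funMap_neg] using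
      S.fun_mem negFunc ![a] (fun i => by fin_cases i <;> assumption)

theorem mem_toSubring_iff {R : Type*} [CommRing R] [CompatibleRing R]
    (S : Language.ring.Substructure R) (x : R) :
    x ∈ S.toSubring ↔ x ∈ S := Iff.rfl

/-- An elementary substructure of a Noetherian commutative ring (in the first-order
language of rings), with its induced ring structure as a subring, is a Noetherian ring. -/
theorem isNoetherianRing_of_elementarySubstructure {R : Type*} [CommRing R]
    [CompatibleRing R] [IsNoetherianRing R]
    (S : Language.ring.ElementarySubstructure R) :
    IsNoetherianRing ↥(S.toSubstructure.toSubring) := by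
  classical
  rw [isNoetherianRing_iff_ideal_fg]
  intro I
  obtain ⟨g, hg⟩ := (isNoetherianRing_iff_ideal_fg R).mp ‹_›
    (Ideal.span ((↑) '' (I : Set S.toSubstructure.toSubring)))
  set s : Set R := (↑) '' (I : Set S.toSubstructure.toSubring) with hs
  -- find a finite subset t of s spanning the same ideal of R
  have hsub : ∀ x ∈ g, ∃ t : Finset R, ↑t ⊆ s ∧ x ∈ Ideal.span (t : Set R) := by
    intro x hx
    have := Ideal.subset_span (s := (g : Set R)) hx
    rw [hg] at this
    exact Submodule.mem_span_finite_of_mem_span this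
  choose T hT hmemT using hsub
  set t : Finset R := g.attach.biUnion (fun x => T x.1 x.2) with ht
  have hts : (↑t : Set R) ⊆ s := by
    intro x hx
    simp only [ht, Finset.coe_biUnion, Set.mem_iUnion] at hx
    obtain ⟨y, hy, hxy⟩ := hx
    exact hT y.1 y.2 hxy
  have hspan : Ideal.span (t : Set R) = Ideal.span s := by
    apply le_antisymm
    · exact Ideal.span_mono hts
    · rw [← hg]
      apply Ideal.span_le.2
      intro x hx
      refine SetLike.le_def.mp (Ideal.span_mono ?_) (hmemT x hx)
      intro y hy
      simp only [ht, Finset.coe_biUnion, Set.mem_iUnion]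
      exact ⟨⟨x, hx⟩, Finset.mem_attach _ _, hy⟩
  -- pull t back to I
  have hpull : ∀ x : {x // x ∈ t}, ∃ y : S.toSubstructure.toSubring, y ∈ I ∧ (y : R) = x.1 := by
    intro x
    obtain ⟨y, hy, hyx⟩ := hts x.2
    exact ⟨y, hy, hyx⟩
  choose a haI hacoe using hpull
  have hrange : Set.range (fun x : {x // x ∈ t} => ((a x : S.toSubstructure.toSubring) : R))
      = (t : Set R) := by
    ext z
    constructor
    · rintro ⟨x, rfl⟩; simpa [hacoe] using x.2
    · intro hz; exact ⟨⟨z, hz⟩, hacoe ⟨z, hz⟩⟩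
  refine ⟨(Finset.univ.image a), ?_⟩
  rw [Finset.coe_image, Finset.coe_univ, Set.image_univ]
  apply le_antisymm
  · rw [Ideal.span_le]; rintro y ⟨x, rfl⟩; exact haI x
  · intro b hb
    rw [Ideal.mem_span_range_iff_exists_fun]
    -- b is in the R-span of t
    have hbR : (b : R) ∈ Ideal.span (t : Set R) := by
      rw [hspan]; exact Ideal.subset_span ⟨b, hb, rfl⟩
    rw [← hrange, Ideal.mem_span_range_iff_exists_fun] at hbR
    obtain ⟨c, hc⟩ := hbR
    -- now transfer the existential to R₀ using elementarity
    -- free variables: Option {x // x ∈ t} (none ↦ b, some i ↦ a i); quantified: {x // x ∈ t}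
    set p : FreeCommRing (Option {x // x ∈ t} ⊕ {x // x ∈ t}) := FreeCommRing.of (Sum.inl none) with hp
    set q : FreeCommRing (Option {x // x ∈ t} ⊕ {x // x ∈ t}) :=
      ∑ i : {x // x ∈ t}, FreeCommRing.of (Sum.inr i) * FreeCommRing.of (Sum.inl (some i)) with hq
    set φ : Language.ring.Formula (Option {x // x ∈ t} ⊕ {x // x ∈ t}) :=
      (termOfFreeCommRing p).equal (termOfFreeCommRing q) with hφ
    set ψ : Language.ring.Formula (Option {x // x ∈ t}) := φ.iExs {x // x ∈ t} with hψ
    have hrealize : ∀ (w : (Option {x // x ∈ t} ⊕ {x // x ∈ t}) → R),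
        φ.Realize w ↔ w (Sum.inl none) = ∑ i : {x // x ∈ t}, w (Sum.inr i) * w (Sum.inl (some i)) := by
      intro w
      rw [hφ, Language.Formula.realize_equal, realize_termOfFreeCommRing, realize_termOfFreeCommRing,
        hp, hq]
      simp [FreeCommRing.lift_of]
    -- valuation in S
    have hbS : (b : R) ∈ S.toSubstructure := b.2
    have haS : ∀ x : {x // x ∈ t}, ((a x : S.toSubstructure.toSubring) : R) ∈ S.toSubstructure :=
      fun x => (a x).2
    set v : Option {x // x ∈ t} → S.toSubstructure :=
      fun o => Option.rec ⟨b, hbS⟩ (fun i => ⟨a i, haS i⟩) o with hv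
    have h1 : ψ.Realize (fun o => ((v o : R))) := by
      rw [hψ, Language.Formula.realize_iExs]
      refine ⟨c, ?_⟩
      rw [hrealize]
      simp only [hv, id_eq, Sum.elim_inl, Sum.elim_inr]
      simpa [mul_comm] using hc.symm
    have h2 : ψ.Realize v := by
      refine (S.subtype.map_formula ψ v).1 ?_
      exact h1
    rw [hψ, Language.Formula.realize_iExs] at h2
    obtain ⟨d, hd⟩ := h2
    have h3 := (S.subtype.map_formula φ (fun a => Sum.elim v d (id a))).2 hd
    rw [hrealize] at h3
    simp only [Function.comp_apply, id_eq, Sum.elim_inl, Sum.elim_inr, hv,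
      Language.ElementarySubstructure.coe_subtype] at h3
    -- build coefficients in R₀
    refine ⟨fun x => ⟨(d x : R), (d x).2⟩, ?_⟩
    apply Subtype.ext
    push_cast
    rw [h3]
end
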